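/- arXiv:2105.12957 — 3 statements merged into one kernel-verified Lean document; each statement's English description precedes it below -/
import Mathlib

section
/- Let P, h : ℝ → ℝ be continuous, v_b, v_u twice continuously differentiable solutions of w'' + P w = 0 with Wronskian v_b v_u' − v_b' v_u ≡ 1, ∫_{−∞}^0 |h v_b| < ∞, and let v(X) = −(∫₀^X h v_u)·v_b(X) + (∫_{−∞}^X h v_b)·v_u(X). Suppose there are α, β > 0 with lim_{X→∞} v_b(X) e^{√α X} = β√α and lim_{X→∞} v_u(X) e^{−√α X} = 1/(2αβ), suppose h is bounded on ℝ, and suppose ∫_{−∞}^∞ h(t) v_b(t) dt converges absolutely with value M_h. Then lim_{X→∞} v(X) e^{−√α X} = M_h /(2 α β). -/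
/-!
Put `s = √α`. In `v X e^{-sX}` the term `(∫_{-∞}^X h v_b) · v_u X e^{-sX}` tends to
`M_h / (2αβ)`. For the other term, `v_u = O(e^{sX})` and `h` is bounded, so
`∫_0^X h v_u = O(e^{sX})`, while `v_b = O(e^{-sX})`; the term is therefore
`O(e^{sX} e^{-sX} e^{-sX}) = O(e^{-sX})` and tends to `0`.
-/

open MeasureTheory Real Filter Asymptotics Set Topology

theorem isBigO_exp_neg_mul_of_tendsto {f : ℝ → ℝ} {c L : ℝ} {l : Filter ℝ}
    (h : Tendsto (fun x => f x * exp (c * x)) l (𝓝 L)) : f =O[l] fun x => exp (-c * x) :=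
  ((h.isBigO_one ℝ).mul (isBigO_refl (fun x => exp (-c * x)) l)).congr
    (fun x => by rw [mul_assoc, ← exp_add, neg_mul, add_neg_cancel, exp_zero, mul_one])
    (fun x => one_mul _)

theorem intervalIntegral_exp_mul_le {s : ℝ} (hs : 0 < s) (a b : ℝ) :
    ∫ t in a..b, exp (s * t) ≤ exp (s * b) / s := by
  rw [intervalIntegral.integral_comp_mul_left (fun t => exp t) hs.ne', integral_exp, smul_eq_mul,
    inv_mul_eq_div]
  gcongr
  exact sub_le_self _ (exp_pos _).le

theorem isBigO_intervalIntegral_exp_mul {f : ℝ → ℝ} {s : ℝ} (hs : 0 < s) (a : ℝ)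
    (hf : Continuous f) (hO : f =O[atTop] fun t => exp (s * t)) :
    (fun x => ∫ t in a..x, f t) =O[atTop] fun x => exp (s * x) := by
  obtain ⟨C, hC, hCf⟩ := hO.exists_pos
  obtain ⟨T, hT⟩ := eventually_atTop.1 hCf.bound
  have hsplit : (fun x => ∫ t in a..x, f t) = fun x => (∫ t in a..T, f t) + ∫ t in T..x, f t :=
    funext fun x => (intervalIntegral.integral_add_adjacent_intervals
      (hf.intervalIntegrable _ _) (hf.intervalIntegrable _ _)).symm
  rw [hsplit]
  refine IsBigO.add ?_ (IsBigO.of_bound (C / s) ?_)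
  · exact (isBigO_const_one ℝ _ atTop).trans
      (isLittleO_one_exp_comp.2 (tendsto_id.const_mul_atTop hs)).isBigO
  · filter_upwards [eventually_ge_atTop T] with x hx
    calc ‖∫ t in T..x, f t‖ ≤ ∫ t in T..x, C * exp (s * t) :=
          intervalIntegral.norm_integral_le_of_norm_le hx
            (ae_of_all _ fun t ht => by simpa using hT t ht.1.le)
            ((by fun_prop : Continuous fun t => C * exp (s * t)).intervalIntegrable _ _)
      _ ≤ C * (exp (s * x) / s) := by
          rw [intervalIntegral.integral_const_mul]
          exact mul_le_mul_of_nonneg_left (intervalIntegral_exp_mul_le hs T x) hC.le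
      _ = C / s * ‖exp (s * x)‖ := by rw [norm_of_nonneg (exp_pos _).le]; ring

theorem stmt_6_general (h vb vu v : ℝ → ℝ) (α β M_h : ℝ)
    (hh : Continuous h)
    (hvu : ContDiff ℝ 2 vu)
    (hv : ∀ X, v X = -(∫ t in (0:ℝ)..X, h t * vu t) * vb X +
      (∫ t in Set.Iic X, h t * vb t) * vu X)
    (hα : 0 < α)
    (hvblim : Filter.Tendsto (fun X => vb X * Real.exp (Real.sqrt α * X)) Filter.atTop
      (nhds (β * Real.sqrt α)))
    (hvulim : Filter.Tendsto (fun X => vu X * Real.exp (-(Real.sqrt α) * X)) Filter.atTop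
      (nhds (1 / (2 * α * β))))
    (hbdd : ∃ C, ∀ X, |h X| ≤ C)
    (hint2 : Integrable (fun t => h t * vb t))
    (hMh : ∫ t, h t * vb t = M_h) :
    Filter.Tendsto (fun X => v X * Real.exp (-(Real.sqrt α) * X)) Filter.atTop
      (nhds (M_h / (2 * α * β))) := by
  set s := √α
  have hs : 0 < s := sqrt_pos.2 hα
  obtain ⟨C, hC⟩ := hbdd
  have hvuO : vu =O[atTop] fun x => exp (s * x) := by
    simpa only [neg_neg] using isBigO_exp_neg_mul_of_tendsto hvulim
  have hvbO : vb =O[atTop] fun x => exp (-s * x) := isBigO_exp_neg_mul_of_tendsto hvblim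
  have hIO : (fun X => ∫ t in (0:ℝ)..X, h t * vu t) =O[atTop] fun X => exp (s * X) :=
    isBigO_intervalIntegral_exp_mul hs 0 (hh.mul hvu.continuous)
      ((isBigO_of_le' (c := C) _ fun t => by rw [norm_mul]; gcongr; exact hC t).trans hvuO)
  have hfirst : Tendsto (fun X => -(∫ t in (0:ℝ)..X, h t * vu t) * vb X * exp (-s * X))
      atTop (𝓝 0) := by
    refine IsBigO.trans_tendsto ?_
      (tendsto_exp_atBot.comp (tendsto_id.const_mul_atTop_of_neg (neg_neg_of_pos hs)))
    refine ((hIO.neg_left.mul hvbO).mul (isBigO_refl _ _)).congr_right fun X => ?_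
    simp only [Function.comp_apply, id, ← exp_add]
    ring_nf
  have hsecond : Tendsto (fun X => (∫ t in Iic X, h t * vb t) * (vu X * exp (-s * X)))
      atTop (𝓝 (M_h * (1 / (2 * α * β)))) :=
    (hMh ▸ (aecover_Iic tendsto_id).integral_tendsto_of_countably_generated hint2).mul hvulim
  rw [← zero_add (M_h / _), div_eq_mul_one_div]
  refine (hfirst.add hsecond).congr fun X => ?_
  rw [hv X]
  ring

/-- growth asymptotics of the variation-of-parameters solution of
`v'' + P v = h`: if `v_b(X) ~ β√α e^{-√α X}` and `v_u(X) ~ e^{√α X}/(2αβ)` as `X → ∞`,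
`h` is bounded, and `∫ h v_b` converges absolutely with value `M_h`, then
`v(X) e^{-√α X} → M_h/(2αβ)` as `X → ∞`. -/
theorem stmt_6 (P h vb vu v : ℝ → ℝ) (α β M_h : ℝ)
    (hP : Continuous P) (hh : Continuous h)
    (hvb : ContDiff ℝ 2 vb) (hvu : ContDiff ℝ 2 vu)
    (hvbode : ∀ X, deriv (deriv vb) X + P X * vb X = 0)
    (hvuode : ∀ X, deriv (deriv vu) X + P X * vu X = 0)
    (hWr : ∀ X, vb X * deriv vu X - deriv vb X * vu X = 1)
    (hint : IntegrableOn (fun t => h t * vb t) (Set.Iic 0))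
    (hv : ∀ X, v X = -(∫ t in (0:ℝ)..X, h t * vu t) * vb X +
      (∫ t in Set.Iic X, h t * vb t) * vu X)
    (hα : 0 < α) (hβ : 0 < β)
    (hvblim : Filter.Tendsto (fun X => vb X * Real.exp (Real.sqrt α * X)) Filter.atTop
      (nhds (β * Real.sqrt α)))
    (hvulim : Filter.Tendsto (fun X => vu X * Real.exp (-(Real.sqrt α) * X)) Filter.atTop
      (nhds (1 / (2 * α * β))))
    (hbdd : ∃ C, ∀ X, |h X| ≤ C)
    (hint2 : Integrable (fun t => h t * vb t))
    (hMh : ∫ t, h t * vb t = M_h) :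
    Filter.Tendsto (fun X => v X * Real.exp (-(Real.sqrt α) * X)) Filter.atTop
      (nhds (M_h / (2 * α * β))) :=
  stmt_6_general h vb vu v α β M_h hh hvu hv hα hvblim hvulim hbdd hint2 hMh
end

section
/- Let P, h : ℝ → ℝ be continuous, v_b, v_u twice continuously differentiable solutions of w'' + P w = 0 with Wronskian v_b v_u' − v_b' v_u ≡ 1, ∫_{−∞}^0 |h v_b| < ∞, and let v(X) = −(∫₀^X h v_u)·v_b(X) + (∫_{−∞}^X h v_b)·v_u(X). Let α, β > 0 with lim_{X→∞} v_b(X) e^{√α X} = β√α and lim_{X→∞} v_u(X) e^{−√α X} = 1/(2αβ). Assume there is a constant C with |h(X)| ≤ C e^{−√α X} and |v_b(X)| ≤ C e^{−√α X} for all X ≥ 0, that lim_{X→∞} h(X) e^{√α X} = h̄₀ exists, and that ∫_{−∞}^∞ h v_b converges absolutely with value M_h = 0. Then lim_{X→∞} v(X) e^{√α X} / X = − h̄₀ /(2√α). -/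
/-!
Put `s = √α`. Then
`v X e^{sX} / X = -(X⁻¹ ∫₀^X h v_u) (v_b X e^{sX}) + (X⁻¹ e^{2sX} ∫_{-∞}^X h v_b) (v_u X e^{-sX})`.
Since `h v_u = (h e^{sX}) (v_u e^{-sX}) → h̄₀ / (2αβ)`, its running mean has the same limit, which
gives the first term. Because `M_h = 0`, `∫_{-∞}^X h v_b = -∫_X^∞ h v_b = O(e^{-2sX})`, so the
second term is `O(1/X)`.
-/

open MeasureTheory Filter Set Asymptotics Topology

section

variable {E : Type*} [NormedAddCommGroup E]

lemma MeasureTheory.LocallyIntegrable.intervalIntegrable {f : ℝ → E}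
    (hf : LocallyIntegrable f volume) (a b : ℝ) : IntervalIntegrable f volume a b :=
  intervalIntegrable_iff.mpr <| (hf.integrableOn_isCompact isCompact_uIcc).mono_set uIoc_subset_uIcc

theorem isLittleO_intervalIntegral_of_tendsto_zero [NormedSpace ℝ E] {f : ℝ → E}
    (hf : LocallyIntegrable f volume) (hlim : Tendsto f atTop (𝓝 0)) :
    (fun X => ∫ t in (0:ℝ)..X, f t) =o[atTop] id := by
  refine isLittleO_iff.2 fun ε hε => ?_
  obtain ⟨M, hM⟩ := eventually_atTop.1 <|
    (hlim.eventually (Metric.closedBall_mem_nhds 0 (half_pos hε))).and (eventually_ge_atTop 0)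
  set A := ‖∫ t in (0:ℝ)..M, f t‖
  filter_upwards [eventually_ge_atTop M, eventually_ge_atTop (2 * A / ε)] with X hMX hAX
  have hM0 : 0 ≤ M := (hM M le_rfl).2
  have htail : ‖∫ t in M..X, f t‖ ≤ ε / 2 * (X - M) := by
    have := intervalIntegral.norm_integral_le_of_norm_le_const (a := M) (b := X) (C := ε / 2)
      (f := f) fun t ht => by
        rw [uIoc_of_le hMX] at ht
        simpa using (hM t ht.1.le).1
    rwa [abs_of_nonneg (sub_nonneg.2 hMX)] at this
  have hA : 2 * A ≤ ε * X := by rwa [div_le_iff₀' hε] at hAX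
  rw [Real.norm_eq_abs, id, abs_of_nonneg (hM0.trans hMX),
    ← intervalIntegral.integral_add_adjacent_intervals (hf.intervalIntegrable 0 M)
      (hf.intervalIntegrable M X)]
  calc _ ≤ A + ε / 2 * (X - M) := (norm_add_le _ _).trans (by gcongr)
    _ ≤ ε * X := by nlinarith

end

theorem tendsto_intervalIntegral_div_of_tendsto {f : ℝ → ℝ} {L : ℝ}
    (hf : LocallyIntegrable f volume) (hlim : Tendsto f atTop (𝓝 L)) :
    Tendsto (fun X => (∫ t in (0:ℝ)..X, f t) / X) atTop (𝓝 L) := by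
  have hfL : LocallyIntegrable (fun t => f t - L) volume := hf.sub (locallyIntegrable_const L)
  have h := (isLittleO_intervalIntegral_of_tendsto_zero hfL
    (tendsto_sub_nhds_zero_iff.2 hlim)).tendsto_div_nhds_zero
  refine (zero_add L ▸ h.add_const L).congr' ?_
  filter_upwards [eventually_ne_atTop 0] with X hX
  rw [intervalIntegral.integral_sub (hf.intervalIntegrable 0 X) intervalIntegrable_const,
    intervalIntegral.integral_const, smul_eq_mul, sub_zero, id, sub_div, mul_div_cancel_left₀ _ hX,
    sub_add_cancel]

theorem abs_setIntegral_Ioi_le_of_abs_le_exp {f : ℝ → ℝ} {K c a : ℝ} (hc : 0 < c)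
    (hf : IntegrableOn f (Ioi a)) (hbound : ∀ t > a, |f t| ≤ K * Real.exp (-c * t)) :
    |∫ t in Ioi a, f t| ≤ K * Real.exp (-c * a) / c := by
  have hexp : ∫ t in Ioi a, K * Real.exp (-c * t) = K * Real.exp (-c * a) / c := by
    rw [integral_const_mul, integral_exp_mul_Ioi (neg_lt_zero.2 hc)]
    field_simp
  calc |∫ t in Ioi a, f t| ≤ ∫ t in Ioi a, |f t| := abs_integral_le_integral_abs
    _ ≤ ∫ t in Ioi a, K * Real.exp (-c * t) :=
      setIntegral_mono_on hf.abs ((exp_neg_integrableOn_Ioi a hc).const_mul K) measurableSet_Ioi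
        hbound
    _ = K * Real.exp (-c * a) / c := hexp

theorem setIntegral_Iic_eq_neg_setIntegral_Ioi {f : ℝ → ℝ} (hf : Integrable f)
    (hzero : ∫ t, f t = 0) (X : ℝ) : ∫ t in Iic X, f t = -∫ t in Ioi X, f t := by
  rw [eq_neg_iff_add_eq_zero, intervalIntegral.integral_Iic_add_Ioi hf.integrableOn hf.integrableOn,
    hzero]

theorem tendsto_setIntegral_Iic_mul_exp_div_atTop {f : ℝ → ℝ} {K c : ℝ} (hc : 0 < c)
    (hf : Integrable f) (hzero : ∫ t, f t = 0)
    (hbound : ∀ t ≥ 0, |f t| ≤ K * Real.exp (-c * t)) :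
    Tendsto (fun X => (∫ t in Iic X, f t) * Real.exp (c * X) / X) atTop (𝓝 0) := by
  have hbdd : ∀ X ≥ 0, |(∫ t in Iic X, f t) * Real.exp (c * X)| ≤ K / c := by
    intro X hX
    have htail := abs_setIntegral_Ioi_le_of_abs_le_exp hc hf.integrableOn
      fun t ht => hbound t (hX.trans ht.le)
    rw [abs_mul, Real.abs_exp, setIntegral_Iic_eq_neg_setIntegral_Ioi hf hzero, abs_neg]
    calc _ ≤ K * Real.exp (-c * X) / c * Real.exp (c * X) := by gcongr
      _ = K / c := by rw [mul_div_right_comm, mul_assoc, ← Real.exp_add]; simp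
  rw [tendsto_zero_iff_abs_tendsto_zero]
  refine squeeze_zero' (Eventually.of_forall fun X => abs_nonneg _) ?_
    (tendsto_const_nhds (x := K / c) |>.div_atTop tendsto_id)
  filter_upwards [eventually_gt_atTop 0] with X hX
  rw [Function.comp_apply, id, abs_div, abs_of_pos hX]
  exact div_le_div_of_nonneg_right (hbdd X hX.le) hX.le

theorem stmt_7_general (h vb vu v : ℝ → ℝ) (α β h₀ : ℝ)
    (hh : Continuous h)
    (hvu : ContDiff ℝ 2 vu)
    (hv : ∀ X, v X = -(∫ t in (0:ℝ)..X, h t * vu t) * vb X +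
      (∫ t in Set.Iic X, h t * vb t) * vu X)
    (hα : 0 < α) (hβ : 0 < β)
    (hvblim : Filter.Tendsto (fun X => vb X * Real.exp (Real.sqrt α * X)) Filter.atTop
      (nhds (β * Real.sqrt α)))
    (hvulim : Filter.Tendsto (fun X => vu X * Real.exp (-(Real.sqrt α) * X)) Filter.atTop
      (nhds (1 / (2 * α * β))))
    (hdecay : ∃ C : ℝ,
      (∀ X ≥ (0:ℝ), |h X| ≤ C * Real.exp (-(Real.sqrt α) * X)) ∧
      (∀ X ≥ (0:ℝ), |vb X| ≤ C * Real.exp (-(Real.sqrt α) * X)))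
    (hhlim : Filter.Tendsto (fun X => h X * Real.exp (Real.sqrt α * X)) Filter.atTop
      (nhds h₀))
    (hint2 : Integrable (fun t => h t * vb t))
    (hMh : ∫ t, h t * vb t = 0) :
    Filter.Tendsto (fun X => v X * Real.exp (Real.sqrt α * X) / X) Filter.atTop
      (nhds (-h₀ / (2 * Real.sqrt α))) := by
  obtain ⟨C, hCh, hCvb⟩ := hdecay
  set s := Real.sqrt α
  have hs : 0 < s := Real.sqrt_pos.2 hα
  have hhvu : Tendsto (fun t => h t * vu t) atTop (𝓝 (h₀ * (1 / (2 * α * β)))) :=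
    (hhlim.mul hvulim).congr fun t => by rw [mul_mul_mul_comm, ← Real.exp_add]; simp
  have hmean : Tendsto (fun X => (∫ t in (0:ℝ)..X, h t * vu t) / X) atTop _ :=
    tendsto_intervalIntegral_div_of_tendsto (hh.mul hvu.continuous).locallyIntegrable hhvu
  have hbound : ∀ t ≥ 0, |h t * vb t| ≤ C ^ 2 * Real.exp (-(2 * s) * t) := fun t ht => by
    calc |h t * vb t| ≤ (C * Real.exp (-s * t)) * (C * Real.exp (-s * t)) := by
          rw [abs_mul]
          exact mul_le_mul (hCh t ht) (hCvb t ht) (abs_nonneg _) ((abs_nonneg _).trans (hCh t ht))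
      _ = C ^ 2 * Real.exp (-(2 * s) * t) := by rw [mul_mul_mul_comm, ← Real.exp_add]; ring_nf
  have hrest := tendsto_setIntegral_Iic_mul_exp_div_atTop (by positivity) hint2 hMh hbound
  have hlim := (hmean.neg.mul hvblim).add (hrest.mul hvulim)
  convert hlim.congr' ?_ using 2
  · rw [← Real.sq_sqrt hα.le]
    field_simp
    ring
  · filter_upwards [eventually_ne_atTop 0] with X hX
    rw [hv X, show 2 * s * X = s * X + s * X by ring, Real.exp_add,
      show -s * X = -(s * X) by ring, Real.exp_neg]
    field_simp

/-- refined asymptotics (case `j = -1`) of the variation-of-parameters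
solution of `v'' + P v = h` when the Melnikov quantity `M_h = ∫ h v_b` vanishes:
if `h(X) e^{√α X} → h̄₀` and `h`, `v_b` decay like `e^{-√α X}` on `[0,∞)`, then
`v(X) e^{√α X}/X → -h̄₀/(2√α)` as `X → ∞`. -/
theorem stmt_7 (P h vb vu v : ℝ → ℝ) (α β h₀ : ℝ)
    (hP : Continuous P) (hh : Continuous h)
    (hvb : ContDiff ℝ 2 vb) (hvu : ContDiff ℝ 2 vu)
    (hvbode : ∀ X, deriv (deriv vb) X + P X * vb X = 0)
    (hvuode : ∀ X, deriv (deriv vu) X + P X * vu X = 0)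
    (hWr : ∀ X, vb X * deriv vu X - deriv vb X * vu X = 1)
    (hint : IntegrableOn (fun t => h t * vb t) (Set.Iic 0))
    (hv : ∀ X, v X = -(∫ t in (0:ℝ)..X, h t * vu t) * vb X +
      (∫ t in Set.Iic X, h t * vb t) * vu X)
    (hα : 0 < α) (hβ : 0 < β)
    (hvblim : Filter.Tendsto (fun X => vb X * Real.exp (Real.sqrt α * X)) Filter.atTop
      (nhds (β * Real.sqrt α)))
    (hvulim : Filter.Tendsto (fun X => vu X * Real.exp (-(Real.sqrt α) * X)) Filter.atTop
      (nhds (1 / (2 * α * β))))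
    (hdecay : ∃ C : ℝ,
      (∀ X ≥ (0:ℝ), |h X| ≤ C * Real.exp (-(Real.sqrt α) * X)) ∧
      (∀ X ≥ (0:ℝ), |vb X| ≤ C * Real.exp (-(Real.sqrt α) * X)))
    (hhlim : Filter.Tendsto (fun X => h X * Real.exp (Real.sqrt α * X)) Filter.atTop
      (nhds h₀))
    (hint2 : Integrable (fun t => h t * vb t))
    (hMh : ∫ t, h t * vb t = 0) :
    Filter.Tendsto (fun X => v X * Real.exp (Real.sqrt α * X) / X) Filter.atTop
      (nhds (-h₀ / (2 * Real.sqrt α))) :=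
  stmt_7_general h vb vu v α β h₀ hh hvu hv hα hβ hvblim hvulim hdecay hhlim hint2 hMh
end

section
/- Let W : ℝ → ℝ be three times continuously differentiable with W'(V̄) = 0 and W''(V̄) = α > 0, and let v : ℝ → ℝ be a twice continuously differentiable solution of v''(X) = W'(v(X)) with v'(X) > 0 for all X, lim_{X→∞} v(X) = V̄ and lim_{X→∞} v'(X) = 0. Then there exists β > 0 such that lim_{X→∞} (V̄ − v(X)) e^{√α X} = β and lim_{X→∞} v'(X) e^{√α X} = β√α. -/
/-!
Write `u = V̄ - v > 0`. Energy conservation gives `v'² = 2 (W v - W V̄)`, and the Taylor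
expansion of `W` at the nondegenerate critical point `V̄` turns this into
`v' = √α u + O(u²)`. Hence `v' ≥ (√α / 2) u` eventually, so `u` is integrable at infinity (it is
dominated by `v' = -u'`), and then the derivative `√α - v'/u = O(u)` of `log u + √α X` is
integrable as well. So `log u + √α X` converges to some `ℓ`, which gives `u e^{√α X} → e^ℓ`,
and `v'/u → √α` gives the second limit.
-/

open Filter Topology Set MeasureTheory

lemma abs_le_mul_pow_succ_of_abs_deriv_le {f f' : ℝ → ℝ} {c δ C : ℝ} {n : ℕ}
    (hf : ∀ z, HasDerivAt f (f' z) z) (hfc : f c = 0) (hC : 0 ≤ C)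
    (hf' : ∀ z, |z - c| ≤ δ → |f' z| ≤ C * |z - c| ^ n) {y : ℝ} (hy : |y - c| ≤ δ) :
    |f y| ≤ C * |y - c| ^ (n + 1) := by
  have hmvt := (convex_uIcc c y).norm_image_sub_le_of_norm_deriv_le (C := C * |y - c| ^ n)
    (fun z _ => (hf z).differentiableAt) (fun z hz => ?_) left_mem_uIcc right_mem_uIcc
  · simpa [hfc, pow_succ, mul_assoc] using hmvt
  · have hzc := abs_sub_left_of_mem_uIcc hz
    rw [(hf z).deriv, Real.norm_eq_abs]
    exact (hf' z (hzc.trans hy)).trans (by gcongr)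

lemma exists_abs_taylor_two_remainder_le {W : ℝ → ℝ} (hW : ContDiff ℝ 3 W) (c : ℝ) :
    ∃ K, ∀ y, |y - c| ≤ 1 →
      |W y - W c - deriv W c * (y - c) - deriv (deriv W) c * (y - c) ^ 2 / 2| ≤
        K * |y - c| ^ 3 := by
  have hW1 : ContDiff ℝ 2 (deriv W) := hW.iterate_deriv' 2 1
  have hW2 : ContDiff ℝ 1 (deriv (deriv W)) := hW.iterate_deriv' 1 2
  obtain ⟨K, hK⟩ := (isCompact_closedBall c 1).exists_bound_of_continuousOn
    (hW2.continuous_deriv le_rfl).continuousOn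
  have hK0 : 0 ≤ K := (norm_nonneg _).trans (hK c (Metric.mem_closedBall_self zero_le_one))
  refine ⟨K, ?_⟩
  have hd0 : ∀ z, HasDerivAt W (deriv W z) z :=
    fun z => (hW.differentiable (by norm_num) z).hasDerivAt
  have hd1 : ∀ z, HasDerivAt (deriv W) (deriv (deriv W) z) z :=
    fun z => (hW1.differentiable (by norm_num) z).hasDerivAt
  have hd2 : ∀ z, HasDerivAt (deriv (deriv W)) (deriv (deriv (deriv W)) z) z :=
    fun z => (hW2.differentiable one_ne_zero z).hasDerivAt
  have hlin : ∀ z, HasDerivAt (fun z => z - c) 1 z := fun z => (hasDerivAt_id z).sub_const c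
  have h1 : ∀ z, |z - c| ≤ 1 → |deriv (deriv W) z - deriv (deriv W) c| ≤ K * |z - c| ^ 1 :=
    fun z => abs_le_mul_pow_succ_of_abs_deriv_le (n := 0) (fun z => (hd2 z).sub_const _)
      (sub_self _) hK0 fun z hz => by
        simpa [← Real.dist_eq] using hK z (Metric.mem_closedBall.mpr (Real.dist_eq z c ▸ hz))
  have h2 : ∀ z, |z - c| ≤ 1 →
      |deriv W z - deriv W c - deriv (deriv W) c * (z - c)| ≤ K * |z - c| ^ 2 :=
    fun z => abs_le_mul_pow_succ_of_abs_deriv_le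
      (fun z => (((hd1 z).sub_const _).sub ((hlin z).const_mul _)).congr_deriv (by ring))
      (by simp) hK0 h1
  exact fun z => abs_le_mul_pow_succ_of_abs_deriv_le
    (fun z => ((((hd0 z).sub_const _).sub ((hlin z).const_mul _)).sub
      ((((hlin z).pow 2).const_mul _).div_const 2)).congr_deriv (by ring))
    (by simp) hK0 h2

lemma deriv_sq_eq_two_mul_sub_of_tendsto {W v : ℝ → ℝ} {c : ℝ} (hW : Differentiable ℝ W)
    (hv : ContDiff ℝ 2 v) (hode : ∀ x, deriv (deriv v) x = deriv W (v x))
    (hlim : Tendsto v atTop (𝓝 c)) (hlim' : Tendsto (deriv v) atTop (𝓝 0)) (x : ℝ) :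
    deriv v x ^ 2 = 2 * (W (v x) - W c) := by
  set E : ℝ → ℝ := fun x => deriv v x ^ 2 / 2 - W (v x)
  have hE : ∀ x, HasDerivAt E 0 x := fun x => by
    have hv' := ((hv.iterate_deriv' 1 1).differentiable one_ne_zero x).hasDerivAt
    have hWv := (hW (v x)).hasDerivAt.comp x (hv.differentiable two_ne_zero x).hasDerivAt
    exact ((hv'.pow 2).div_const 2 |>.sub hWv).congr_deriv (by simp [hode]; ring)
  have hconst : ∀ y, E y = E x := fun y =>
    is_const_of_deriv_eq_zero (fun z => (hE z).differentiableAt) (fun z => (hE z).deriv) y x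
  have hElim : Tendsto E atTop (𝓝 (0 ^ 2 / 2 - W c)) :=
    ((hlim'.pow 2).div_const 2).sub ((hW.continuous.tendsto c).comp hlim)
  have hEx : E x = 0 ^ 2 / 2 - W c :=
    tendsto_nhds_unique (tendsto_const_nhds.congr fun y => (hconst y).symm) hElim
  simp only [E] at hEx
  linarith

lemma abs_sub_le_abs_sq_sub_sq_div {p q : ℝ} (hp : 0 ≤ p) (hq : 0 < q) :
    |p - q| ≤ |p ^ 2 - q ^ 2| / q := by
  rw [le_div_iff₀ hq, sq_sub_sq, abs_mul, mul_comm, abs_of_pos (by linarith : 0 < p + q)]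
  gcongr
  linarith

lemma abs_sub_sqrt_mul_le_of_abs_sub_le {p u w α K : ℝ} (hp : 0 ≤ p) (hu : 0 < u) (hα : 0 < α)
    (hpw : p ^ 2 = 2 * w) (hw : |w - α * u ^ 2 / 2| ≤ K * u ^ 3) :
    |p - √α * u| ≤ 2 * K / √α * u ^ 2 := by
  have hαu := mul_pos (Real.sqrt_pos.mpr hα) hu
  refine (abs_sub_le_abs_sq_sub_sq_div hp hαu).trans ?_
  rw [div_le_iff₀ hαu, hpw, mul_pow, Real.sq_sqrt hα.le]
  calc |2 * w - α * u ^ 2| = 2 * |w - α * u ^ 2 / 2| := by rw [← abs_two, ← abs_mul]; ring_nf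
    _ ≤ 2 * (K * u ^ 3) := by gcongr
    _ = 2 * K / √α * u ^ 2 * (√α * u) := by field_simp

lemma integrableOn_Ioi_of_mul_le_neg_deriv {u p : ℝ → ℝ} {x₀ k l : ℝ}
    (hu : ∀ x, HasDerivAt u (-p x) x) (hu_nonneg : ∀ x ∈ Ioi x₀, 0 ≤ u x) (hk : 0 < k)
    (hle : ∀ x ∈ Ioi x₀, k * u x ≤ p x) (hlim : Tendsto u atTop (𝓝 l)) :
    IntegrableOn u (Ioi x₀) := by
  have hp_int : IntegrableOn p (Ioi x₀) := by
    simpa using (integrableOn_Ioi_deriv_of_nonpos' (fun x _ => hu x) (fun x hx => by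
      linarith [hle x hx, mul_nonneg hk.le (hu_nonneg x hx)]) hlim).neg
  have hu_cont : Continuous u := continuous_iff_continuousAt.mpr fun x => (hu x).continuousAt
  refine (hp_int.const_mul k⁻¹).mono' hu_cont.aestronglyMeasurable
    ((ae_restrict_iff' measurableSet_Ioi).mpr (ae_of_all _ fun x hx => ?_))
  rw [Real.norm_of_nonneg (hu_nonneg x hx), ← div_eq_inv_mul, le_div_iff₀ hk, mul_comm]
  exact hle x hx

theorem exists_tendsto_mul_exp_of_abs_sub_le_sq {u p : ℝ → ℝ} {a C : ℝ}
    (hu : ∀ x, HasDerivAt u (-p x) x) (hu_pos : ∀ x, 0 < u x)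
    (hu0 : Tendsto u atTop (𝓝 0)) (ha : 0 < a)
    (hclose : ∀ᶠ x in atTop, |p x - a * u x| ≤ C * u x ^ 2) :
    ∃ β > 0, Tendsto (fun x => u x * Real.exp (a * x)) atTop (𝓝 β) ∧
      Tendsto (fun x => p x * Real.exp (a * x)) atTop (𝓝 (β * a)) := by
  set φ : ℝ → ℝ := fun x => a - p x / u x
  have hφ_le : ∀ᶠ x in atTop, |φ x| ≤ C * u x := by
    filter_upwards [hclose] with x hx
    have hφx : φ x = -((p x - a * u x) / u x) := by
      simp only [φ]; field_simp [(hu_pos x).ne']; ring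
    rw [hφx, abs_neg, abs_div, abs_of_pos (hu_pos x), div_le_iff₀ (hu_pos x)]
    linarith
  have hratio : Tendsto (fun x => p x / u x) atTop (𝓝 a) := by
    have hφ0 : Tendsto φ atTop (𝓝 0) :=
      squeeze_zero_norm' hφ_le (by simpa using hu0.const_mul C)
    simpa [φ] using hφ0.const_sub a
  obtain ⟨x₀, hx₀⟩ := eventually_atTop.mp
    (hφ_le.and (hratio.eventually (lt_mem_nhds (half_lt_self ha))))
  have hu_int : IntegrableOn u (Ioi x₀) :=
    integrableOn_Ioi_of_mul_le_neg_deriv hu (fun x _ => (hu_pos x).le) (half_pos ha)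
      (fun x hx => ((lt_div_iff₀ (hu_pos x)).mp (hx₀ x (le_of_lt hx)).2).le) hu0
  have hp_meas : Measurable p := by
    have hp : p = fun x => -deriv u x := funext fun x => by rw [(hu x).deriv, neg_neg]
    exact hp ▸ (measurable_deriv u).neg
  have hu_meas : Measurable u :=
    (continuous_iff_continuousAt.mpr fun x => (hu x).continuousAt).measurable
  have hφ_int : IntegrableOn φ (Ioi x₀) :=
    (hu_int.const_mul C).mono' (measurable_const.sub (hp_meas.div hu_meas)).aestronglyMeasurable
      ((ae_restrict_iff' measurableSet_Ioi).mpr (ae_of_all _ fun x hx => (hx₀ x (le_of_lt hx)).1))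
  set L : ℝ → ℝ := fun x => Real.log (u x) + a * x
  have hL : ∀ x, HasDerivAt L (φ x) x := fun x =>
    (((hu x).log (hu_pos x).ne').add ((hasDerivAt_id x).const_mul a)).congr_deriv
      (by simp [φ]; ring)
  have hL_lim := tendsto_limUnder_of_hasDerivAt_of_integrableOn_Ioi (fun x _ => hL x) hφ_int
  have hu_exp : Tendsto (fun x => u x * Real.exp (a * x)) atTop
      (𝓝 (Real.exp (limUnder atTop L))) := by
    refine ((Real.continuous_exp.tendsto _).comp hL_lim).congr fun x => ?_
    simp [L, Real.exp_add, Real.exp_log (hu_pos x)]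
  refine ⟨_, Real.exp_pos _, hu_exp, ?_⟩
  refine (mul_comm a _ ▸ hratio.mul hu_exp).congr fun x => ?_
  field_simp [(hu_pos x).ne']

/-- exponential approach to a nondegenerate saddle: an increasing solution
of `v'' = W'(v)` converging to `V̄` (with `W'(V̄) = 0`, `W''(V̄) = α > 0`) satisfies
`V̄ - v(X) ~ β e^{-√α X}` and `v'(X) ~ β√α e^{-√α X}` as `X → ∞` for some `β > 0`. -/
theorem stmt_8 (W v : ℝ → ℝ) (Vbar α : ℝ)
    (hW : ContDiff ℝ 3 W) (hW' : deriv W Vbar = 0)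
    (hα : deriv (deriv W) Vbar = α) (hαpos : 0 < α)
    (hv : ContDiff ℝ 2 v)
    (hode : ∀ X, deriv (deriv v) X = deriv W (v X))
    (hpos : ∀ X, 0 < deriv v X)
    (hlim : Filter.Tendsto v Filter.atTop (nhds Vbar))
    (hlim' : Filter.Tendsto (deriv v) Filter.atTop (nhds 0)) :
    ∃ β > (0:ℝ),
      Filter.Tendsto (fun X => (Vbar - v X) * Real.exp (Real.sqrt α * X)) Filter.atTop
        (nhds β) ∧
      Filter.Tendsto (fun X => deriv v X * Real.exp (Real.sqrt α * X)) Filter.atTop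
        (nhds (β * Real.sqrt α)) := by
  obtain ⟨K, hK⟩ := exists_abs_taylor_two_remainder_le hW Vbar
  simp only [hW', hα, zero_mul, sub_zero] at hK
  have hu0 : Tendsto (fun X => Vbar - v X) atTop (𝓝 0) := by
    simpa using hlim.const_sub Vbar
  have hu_pos : ∀ X, 0 < Vbar - v X := fun X => sub_pos.mpr <|
    (strictMono_of_deriv_pos hpos (lt_add_one X)).trans_le
      ((strictMono_of_deriv_pos hpos).monotone.ge_of_tendsto hlim _)
  have hclose : ∀ᶠ X in atTop,
      |deriv v X - √α * (Vbar - v X)| ≤ 2 * K / √α * (Vbar - v X) ^ 2 := by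
    filter_upwards [hu0.eventually (Metric.closedBall_mem_nhds 0 one_pos)] with X hX
    have hKX := hK (v X) (by simpa [abs_sub_comm] using hX)
    rw [abs_sub_comm (v X), abs_of_pos (hu_pos X), sub_sq_comm] at hKX
    exact abs_sub_sqrt_mul_le_of_abs_sub_le (hpos X).le (hu_pos X) hαpos
      (deriv_sq_eq_two_mul_sub_of_tendsto (hW.differentiable (by norm_num)) hv hode hlim hlim' X)
      hKX
  exact exists_tendsto_mul_exp_of_abs_sub_le_sq
    (fun X => ((hv.differentiable two_ne_zero X).hasDerivAt).const_sub Vbar) hu_pos hu0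
    (Real.sqrt_pos.mpr hαpos) hclose
end
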